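/- arXiv:2601.13483 — 2 statements merged into one kernel-verified Lean document; each statement's English description precedes it below -/
import Mathlib

section
/- For i, k ∈ [n], j ∈ [u_i+1, v_i] and l ∈ [u_k+1, v_k], one has a_{k,l} ≤ a_{i,j} in 𝓛 if and only if k ≥ i and l − j ≤ k − i. -/
namespace LadderPaper

/-- The tuple `a_{i,j}`: entry `t` is `u t` for `t < i` and `max (j + (t - i)) (u t)` for
`t ≥ i` (indices `t ∈ [1,n]`; entries outside `[1,n]` are set to `0`). -/
def atuple (u : ℕ → ℤ) (n i : ℕ) (j : ℤ) : ℕ → ℤ := fun t =>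
  if 1 ≤ t ∧ t ≤ n then
    (if t < i then u t else max (j + ((t : ℤ) - (i : ℤ))) (u t))
  else 0

/-- The tuple `b_{i,j}`: like `a_{i,j}` but with `i`-th entry `j - 1`. -/
def btuple (u : ℕ → ℤ) (n i : ℕ) (j : ℤ) : ℕ → ℤ := fun t =>
  if 1 ≤ t ∧ t ≤ n then
    (if t < i then u t
     else if t = i then j - 1
     else max (j + ((t : ℤ) - (i : ℤ))) (u t))
  else 0

/-- The tuple `(u_1, …, u_n)`. -/
def utuple (u : ℕ → ℤ) (n : ℕ) : ℕ → ℤ := fun t =>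
  if 1 ≤ t ∧ t ≤ n then u t else 0

/-- The lattice `𝓛` of tuples `c` with `u t ≤ c t ≤ v t` for `t ∈ [1,n]`, strictly
increasing entries, and (normalization) `c t = 0` outside `[1,n]`.  It carries the
componentwise (induced product) order. -/
def ladderL (n : ℕ) (u v : ℕ → ℤ) : Set (ℕ → ℤ) :=
  {c | (∀ t, 1 ≤ t → t ≤ n → u t ≤ c t ∧ c t ≤ v t) ∧
       (∀ t, 1 ≤ t → t + 1 ≤ n → c t < c (t + 1)) ∧
       (∀ t, t = 0 ∨ n < t → c t = 0)}

/-- The set `P_𝓛 = { a_{i,j} : i ∈ [n], j ∈ [u_i + 1, v_i] }`. -/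
def PL (n : ℕ) (u v : ℕ → ℤ) : Set (ℕ → ℤ) :=
  {x | ∃ i : ℕ, ∃ j : ℤ, 1 ≤ i ∧ i ≤ n ∧ u i + 1 ≤ j ∧ j ≤ v i ∧ x = atuple u n i j}

/-- The product poset `𝓛 × [r]`. -/
def ladderLr (n : ℕ) (u v : ℕ → ℤ) (r : ℤ) : Set ((ℕ → ℤ) × ℤ) :=
  {p | p.1 ∈ ladderL n u v ∧ 1 ≤ p.2 ∧ p.2 ≤ r}

/-- The set `P_{𝓛×[r]} = { (a_{i,j}, 1) } ∪ { ((u_1,…,u_n), k) : k ∈ [2,r] }`. -/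
def PLr (n : ℕ) (u v : ℕ → ℤ) (r : ℤ) : Set ((ℕ → ℤ) × ℤ) :=
  {p | (p.1 ∈ PL n u v ∧ p.2 = 1) ∨ (p.1 = utuple u n ∧ 2 ≤ p.2 ∧ p.2 ≤ r)}

/-- `ε_i > 1`, with the convention `ε_n > 1` (i.e. `i = n` or `u_{i+1} - u_i > 1`). -/
def epsGt1 (u : ℕ → ℤ) (n i : ℕ) : Prop := i = n ∨ 1 < u (i + 1) - u i

/-- `θ_{i-1} > 1`, with the convention `θ_0 > 1` (i.e. `i = 1` or `v_i - v_{i-1} > 1`). -/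
def thetaGt1 (v : ℕ → ℤ) (i : ℕ) : Prop := i = 1 ∨ 1 < v i - v (i - 1)

/-- Membership in `C = { i ∈ [n-1] : v_i < u_{i+1} } ∪ { n }`. -/
def inC (n : ℕ) (u v : ℕ → ℤ) (i : ℕ) : Prop :=
  (1 ≤ i ∧ i + 1 ≤ n ∧ v i < u (i + 1)) ∨ i = n

/-- The set `C = { i ∈ [n-1] : v_i < u_{i+1} } ∪ { n }`. -/
def Cset (n : ℕ) (u v : ℕ → ℤ) : Set ℕ :=
  {i | 1 ≤ i ∧ i + 1 ≤ n ∧ v i < u (i + 1)} ∪ {n}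

/-- `[p,q]` is one of the blocks `[p_s, q_s]` determined by `C`: `q ∈ C`,
no element of `C` lies in `[p, q-1]`, and either `p = 1` or `p - 1 ∈ C`. -/
def IsBlock (n : ℕ) (u v : ℕ → ℤ) (p q : ℕ) : Prop :=
  1 ≤ p ∧ p ≤ q ∧ q ≤ n ∧ inC n u v q ∧
    (∀ j, p ≤ j → j < q → ¬ inC n u v j) ∧ (p = 1 ∨ inC n u v (p - 1))

/-- `i0 = min { i ∈ [p,q] : ε_i > 1 }` (with the convention `ε_n > 1`). -/
def IsBlockMin (n : ℕ) (u : ℕ → ℤ) (p q i0 : ℕ) : Prop :=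
  p ≤ i0 ∧ i0 ≤ q ∧ epsGt1 u n i0 ∧ ∀ j, p ≤ j → j < i0 → ¬ epsGt1 u n j

/-- The comparability graph of a poset: two distinct elements are adjacent
iff they are comparable. -/
def compGraph (α : Type*) [Preorder α] : SimpleGraph α where
  Adj x y := x ≠ y ∧ (x ≤ y ∨ y ≤ x)
  symm := ⟨fun x y h => ⟨Ne.symm h.1, Or.symm h.2⟩⟩
  loopless := ⟨fun x h => h.1 rfl⟩

/-- A poset is pure if all of its maximal chains have the same cardinality
(equivalently, the same length). -/
def IsPure (α : Type*) [Preorder α] : Prop :=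
  ∀ A B : Set α, IsMaxChain (· ≤ ·) A → IsMaxChain (· ≤ ·) B → A.ncard = B.ncard

section atuple

variable {u : ℕ → ℤ} {n i k t : ℕ} {j l : ℤ}

theorem atuple_of_lt (ht₁ : 1 ≤ t) (htn : t ≤ n) (hti : t < i) : atuple u n i j t = u t := by
  simp [atuple, ht₁, htn, hti]

theorem atuple_of_le (ht₁ : 1 ≤ t) (htn : t ≤ n) (hit : i ≤ t) :
    atuple u n i j t = max (j + ((t : ℤ) - i)) (u t) := by
  simp [atuple, ht₁, htn, not_lt.mpr hit]

theorem atuple_le_atuple (hik : i ≤ k) (hlj : l - j ≤ (k : ℤ) - i) :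
    atuple u n k l ≤ atuple u n i j := by
  refine Pi.le_def.mpr fun t => ?_
  by_cases ht : 1 ≤ t ∧ t ≤ n
  · obtain ⟨ht₁, htn⟩ := ht
    rcases lt_or_ge t i with hti | hit
    · rw [atuple_of_lt ht₁ htn hti, atuple_of_lt ht₁ htn (hti.trans_le hik)]
    rw [atuple_of_le ht₁ htn hit]
    rcases lt_or_ge t k with htk | hkt
    · rw [atuple_of_lt ht₁ htn htk]
      exact le_max_right _ _
    · rw [atuple_of_le ht₁ htn hkt]
      exact max_le_max (by omega) le_rfl
  · simp [atuple, ht]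

/-- Comparing the `k`-th entries already forces the inequalities, because `a_{k,l}` has
`k`-th entry `l > u k`. -/
theorem le_and_sub_le_of_atuple_le (hk₁ : 1 ≤ k) (hkn : k ≤ n) (hl : u k < l)
    (h : atuple u n k l ≤ atuple u n i j) : i ≤ k ∧ l - j ≤ (k : ℤ) - i := by
  have hkk := Pi.le_def.mp h k
  rw [atuple_of_le hk₁ hkn le_rfl, sub_self, add_zero] at hkk
  have hl_le := (le_max_left _ _).trans hkk
  rcases lt_or_ge k i with hki | hik
  · rw [atuple_of_lt hk₁ hkn hki] at hl_le
    omega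
  · rw [atuple_of_le hk₁ hkn hik] at hl_le
    exact ⟨hik, by rcases le_max_iff.mp hl_le with h' | h' <;> omega⟩

end atuple

theorem stmt1_general
    (n : ℕ) (u v : ℕ → ℤ) :
    ∀ i k : ℕ, ∀ j l : ℤ, 1 ≤ i → i ≤ n → 1 ≤ k → k ≤ n →
      u i + 1 ≤ j → j ≤ v i → u k + 1 ≤ l → l ≤ v k →
      (atuple u n k l ≤ atuple u n i j ↔ (i ≤ k ∧ l - j ≤ (k : ℤ) - (i : ℤ))) := by
  intro i k j l _ _ hk₁ hkn _ _ hl _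
  exact ⟨le_and_sub_le_of_atuple_le hk₁ hkn (by omega), fun h => atuple_le_atuple h.1 h.2⟩

theorem stmt1
    (n m : ℕ) (u v : ℕ → ℤ)
    (hn : 1 ≤ n) (hnm : n < m)
    (hu1 : u 1 = 1)
    (humono : ∀ i, 1 ≤ i → i + 1 ≤ n → u i < u (i + 1))
    (hum : u n < (m : ℤ))
    (hv1 : 1 < v 1)
    (hvmono : ∀ i, 1 ≤ i → i + 1 ≤ n → v i < v (i + 1))
    (hvn : v n = (m : ℤ))
    (huv : ∀ i, 1 ≤ i → i ≤ n → u i < v i)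
    (hstep : ∀ i, 1 ≤ i → i + 1 ≤ n → u (i + 1) ≤ v i + 1) :
    ∀ i k : ℕ, ∀ j l : ℤ, 1 ≤ i → i ≤ n → 1 ≤ k → k ≤ n →
      u i + 1 ≤ j → j ≤ v i → u k + 1 ≤ l → l ≤ v k →
      (atuple u n k l ≤ atuple u n i j ↔ (i ≤ k ∧ l - j ≤ (k : ℤ) - (i : ℤ))) :=
  stmt1_general n u v

end LadderPaper
end

section
/- For every integer r ≥ 2, the poset P_{𝓛×[r]} is pure if and only if P_𝓛 is pure and the rank of P_𝓛 equals r − 2. -/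
/-!
Every element `a_{i,j}` of `P_𝓛` lies strictly above `(u_1,…,u_n)`, so in `P_{𝓛×[r]}` no element
`(a_{i,j}, 1)` is comparable with an element `((u_1,…,u_n), k)`, `k ≥ 2`.  Hence `P_{𝓛×[r]}` is
the disjoint sum of `P_𝓛` and the chain `[2,r]` of `r - 1` elements, whose maximal chains are
the maximal chains of `P_𝓛` together with `[2,r]` itself.
-/

open Set Sum

section OrderEmbedding

variable {α γ : Type*} [Preorder α] [Preorder γ] (f : α ↪o γ)

lemma IsMaxChain.preimage_orderEmbedding {s : Set γ} (hs : IsMaxChain (· ≤ ·) s)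
    (hsf : s ⊆ range f) : IsMaxChain (· ≤ ·) (f ⁻¹' s) := by
  refine ⟨hs.isChain.preimage_embedding f, fun t ht hst => ?_⟩
  have hs_eq : s = f '' t :=
    hs.2 (ht.image f) ((image_preimage_eq_of_subset hsf).ge.trans (image_mono hst))
  rw [hs_eq, preimage_image_eq t f.injective]

lemma IsMaxChain.image_orderEmbedding {t : Set α} (ht : IsMaxChain (· ≤ ·) t)
    (hne : t.Nonempty)
    (hf : ∀ s : Set γ, IsChain (· ≤ ·) s → ∀ a, f a ∈ s → s ⊆ range f) :
    IsMaxChain (· ≤ ·) (f '' t) := by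
  refine ⟨ht.isChain.image f, fun s hs hts => ?_⟩
  obtain ⟨a, ha⟩ := hne
  rw [ht.2 (hs.preimage_embedding f) (image_subset_iff.mp hts),
    image_preimage_eq_of_subset (hf s hs a (hts (mem_image_of_mem f ha)))]

end OrderEmbedding

section Sum

variable {α β : Type*} [Preorder α] [Preorder β]

def inlOrderEmbedding : α ↪o α ⊕ β := ⟨⟨inl, inl_injective⟩, inl_le_inl_iff⟩

def inrOrderEmbedding : β ↪o α ⊕ β := ⟨⟨inr, inr_injective⟩, inr_le_inr_iff⟩

lemma IsChain.subset_range_inl_or_subset_range_inr {s : Set (α ⊕ β)}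
    (hs : IsChain (· ≤ ·) s) : s ⊆ range inl ∨ s ⊆ range inr := by
  rw [or_iff_not_imp_left, not_subset]
  rintro ⟨x, hx, hxl⟩ y hy
  obtain ⟨b, rfl⟩ : ∃ b, x = inr b := by
    cases x with
    | inl a => exact absurd ⟨a, rfl⟩ hxl
    | inr b => exact ⟨b, rfl⟩
  cases y with
  | inl a => exact (hs hx hy inr_ne_inl).elim (absurd · not_inr_le_inl) (absurd · not_inl_le_inr)
  | inr b' => exact ⟨b', rfl⟩

lemma IsMaxChain.image_inl [Nonempty α] {t : Set α} (ht : IsMaxChain (· ≤ ·) t) :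
    IsMaxChain (· ≤ ·) (inl '' t : Set (α ⊕ β)) := by
  refine ht.image_orderEmbedding (inlOrderEmbedding (β := β)) (ht.nonempty_iff.mp ‹_›)
    fun s hs a ha => hs.subset_range_inl_or_subset_range_inr.resolve_right fun hsr => ?_
  obtain ⟨b, hb⟩ := hsr ha
  exact inr_ne_inl hb

lemma IsMaxChain.image_inr [Nonempty β] {t : Set β} (ht : IsMaxChain (· ≤ ·) t) :
    IsMaxChain (· ≤ ·) (inr '' t : Set (α ⊕ β)) := by
  refine ht.image_orderEmbedding (inrOrderEmbedding (α := α)) (ht.nonempty_iff.mp ‹_›)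
    fun s hs b hb => hs.subset_range_inl_or_subset_range_inr.resolve_left fun hsl => ?_
  obtain ⟨a, ha⟩ := hsl hb
  exact inl_ne_inr ha

lemma forall_isMaxChain_sum_iff [Nonempty α] [Nonempty β] {P : Set (α ⊕ β) → Prop} :
    (∀ s, IsMaxChain (· ≤ ·) s → P s) ↔
      (∀ t : Set α, IsMaxChain (· ≤ ·) t → P (inl '' t)) ∧
        ∀ t : Set β, IsMaxChain (· ≤ ·) t → P (inr '' t) := by
  refine ⟨fun h => ⟨fun t ht => h _ ht.image_inl, fun t ht => h _ ht.image_inr⟩, ?_⟩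
  rintro ⟨hl, hr⟩ s hs
  rcases hs.isChain.subset_range_inl_or_subset_range_inr with hsl | hsr
  · rw [← image_preimage_eq_of_subset hsl]
    exact hl _ (hs.preimage_orderEmbedding inlOrderEmbedding hsl)
  · rw [← image_preimage_eq_of_subset hsr]
    exact hr _ (hs.preimage_orderEmbedding inrOrderEmbedding hsr)

end Sum

lemma isMaxChain_iff_eq_univ {β : Type*} [LinearOrder β] {t : Set β} :
    IsMaxChain (· ≤ ·) t ↔ t = univ := by
  have hchain : IsChain (· ≤ ·) (univ : Set β) := fun a _ b _ _ => le_total a b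
  refine ⟨fun ht => ht.2 hchain (subset_univ t), ?_⟩
  rintro rfl
  exact ⟨hchain, fun s _ hs => (univ_subset_iff.mp hs).symm⟩

namespace LadderPaper

section Purity

variable {α β : Type*} [Preorder α] [Preorder β]

lemma IsPure.of_orderIso (e : α ≃o β) (h : IsPure β) : IsPure α := by
  intro A B hA hB
  rw [← ncard_image_of_injective A e.injective, ← ncard_image_of_injective B e.injective]
  exact h _ _ (hA.image e) (hB.image e)

lemma isPure_congr (e : α ≃o β) : IsPure α ↔ IsPure β :=
  ⟨.of_orderIso e.symm, .of_orderIso e⟩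

lemma isPure_iff_forall_ncard_eq {C : Set α} (hC : IsMaxChain (· ≤ ·) C) :
    IsPure α ↔ ∀ A : Set α, IsMaxChain (· ≤ ·) A → A.ncard = C.ncard :=
  ⟨fun h A hA => h A C hA hC, fun h A B hA hB => (h A hA).trans (h B hB).symm⟩

lemma forall_isMaxChain_ncard_eq_iff [Finite α] {k : ℕ} :
    (∀ A : Set α, IsMaxChain (· ≤ ·) A → A.ncard = k) ↔
      IsPure α ∧ (∃ A : Set α, IsChain (· ≤ ·) A ∧ A.ncard = k) ∧
        ∀ A : Set α, IsChain (· ≤ ·) A → A.ncard ≤ k := by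
  constructor
  · intro h
    obtain ⟨M, hM, -⟩ := (IsChain.empty (r := (· ≤ ·)) (α := α)).exists_maxChain
    refine ⟨fun A B hA hB => (h A hA).trans (h B hB).symm, ⟨M, hM.isChain, h M hM⟩,
      fun A hA => ?_⟩
    obtain ⟨N, hN, hAN⟩ := hA.exists_maxChain
    exact h N hN ▸ ncard_le_ncard hAN (toFinite N)
  · rintro ⟨hpure, ⟨A₀, hA₀, rfl⟩, hbound⟩ A hA
    obtain ⟨M, hM, hA₀M⟩ := hA₀.exists_maxChain
    rw [hpure A M hA hM]
    exact le_antisymm (hbound M hM.isChain) (ncard_le_ncard hA₀M (toFinite M))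

end Purity

lemma isPure_sum_iff {α β : Type*} [Preorder α] [LinearOrder β] [Nonempty α] [Nonempty β] :
    IsPure (α ⊕ β) ↔ ∀ t : Set α, IsMaxChain (· ≤ ·) t → t.ncard = Nat.card β := by
  have hC : IsMaxChain (· ≤ ·) (inr '' univ : Set (α ⊕ β)) :=
    (isMaxChain_iff_eq_univ.mpr rfl).image_inr
  rw [isPure_iff_forall_ncard_eq hC, forall_isMaxChain_sum_iff]
  simp only [ncard_image_of_injective _ inl_injective, ncard_image_of_injective _ inr_injective,
    ncard_univ, isMaxChain_iff_eq_univ, forall_eq, and_true]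

section Ladder

variable {n : ℕ} {u v : ℕ → ℤ}

lemma atuple_apply_self {i : ℕ} {j : ℤ} (hi1 : 1 ≤ i) (hin : i ≤ n) (hj : u i ≤ j) :
    atuple u n i j i = j := by
  simp only [atuple, if_pos (And.intro hi1 hin), if_neg (lt_irrefl i)]
  omega

lemma utuple_apply {i : ℕ} (hi1 : 1 ≤ i) (hin : i ≤ n) : utuple u n i = u i := by
  simp [utuple, hi1, hin]

lemma not_le_utuple_of_mem_PL {x : ℕ → ℤ} (hx : x ∈ PL n u v) : ¬ x ≤ utuple u n := by
  obtain ⟨i, j, hi1, hin, hj, -, rfl⟩ := hx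
  intro h
  have hi : atuple u n i j i ≤ utuple u n i := h i
  rw [atuple_apply_self hi1 hin (by omega), utuple_apply hi1 hin] at hi
  omega

lemma PL_finite : (PL n u v).Finite := by
  refine ((finite_Icc 1 n).biUnion fun i _ =>
    (finite_Icc (u i + 1) (v i)).image (atuple u n i)).subset ?_
  rintro x ⟨i, j, hi1, hin, hj1, hj2, rfl⟩
  exact mem_biUnion ⟨hi1, hin⟩ ⟨j, ⟨hj1, hj2⟩, rfl⟩

lemma PL_nonempty (hn : 1 ≤ n) (huv : u 1 < v 1) : (PL n u v).Nonempty :=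
  ⟨_, 1, u 1 + 1, le_rfl, hn, le_rfl, huv, rfl⟩

variable {r : ℤ}

def sumToPLr : PL n u v ⊕ Icc (2 : ℤ) r → PLr n u v r
  | inl a => ⟨(a, 1), .inl ⟨a.2, rfl⟩⟩
  | inr k => ⟨(utuple u n, k), .inr ⟨rfl, k.2.1, k.2.2⟩⟩

lemma sumToPLr_le_sumToPLr_iff :
    ∀ x y : PL n u v ⊕ Icc (2 : ℤ) r, sumToPLr x ≤ sumToPLr y ↔ x ≤ y
  | inl a, inl b => by simp [sumToPLr, ← Subtype.coe_le_coe]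
  | inl a, inr _ => iff_of_false (fun h => not_le_utuple_of_mem_PL a.2 h.1) not_inl_le_inr
  | inr k, inl _ =>
    iff_of_false (fun h => by have : (k : ℤ) ≤ 1 := h.2; linarith [k.2.1]) not_inr_le_inl
  | inr k, inr l => by simp [sumToPLr, ← Subtype.coe_le_coe]

lemma sumToPLr_surjective :
    Function.Surjective (sumToPLr : PL n u v ⊕ Icc (2 : ℤ) r → PLr n u v r) := by
  rintro ⟨⟨x, k⟩, ⟨hx, rfl : k = 1⟩ | ⟨rfl : x = utuple u n, hk⟩⟩
  · exact ⟨inl ⟨x, hx⟩, rfl⟩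
  · exact ⟨inr ⟨k, hk⟩, rfl⟩

noncomputable def sumOrderIsoPLr : PL n u v ⊕ Icc (2 : ℤ) r ≃o PLr n u v r :=
  .ofSurjective (.ofMapLEIff sumToPLr sumToPLr_le_sumToPLr_iff) sumToPLr_surjective

end Ladder

theorem stmt11_general
    (n : ℕ) (u v : ℕ → ℤ)
    (hn : 1 ≤ n)
    (huv : ∀ i, 1 ≤ i → i ≤ n → u i < v i)
    (r : ℕ) (hr : 2 ≤ r) :
    IsPure ↥(PLr n u v (r : ℤ)) ↔
      (IsPure ↥(PL n u v) ∧
       (∃ A : Set ↥(PL n u v), IsChain (· ≤ ·) A ∧ A.ncard = r - 1) ∧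
       (∀ A : Set ↥(PL n u v), IsChain (· ≤ ·) A → A.ncard ≤ r - 1)) := by
  have : Finite (PL n u v) := PL_finite.to_subtype
  have : Nonempty (PL n u v) := (PL_nonempty hn (huv 1 le_rfl hn)).to_subtype
  have : Nonempty (Icc (2 : ℤ) r) := ⟨⟨2, le_rfl, by exact_mod_cast hr⟩⟩
  have hcard : Nat.card (Icc (2 : ℤ) r) = r - 1 := by simp; omega
  rw [← isPure_congr sumOrderIsoPLr, isPure_sum_iff, hcard, forall_isMaxChain_ncard_eq_iff]

theorem stmt11
    (n m : ℕ) (u v : ℕ → ℤ)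
    (hn : 1 ≤ n) (hnm : n < m)
    (hu1 : u 1 = 1)
    (humono : ∀ i, 1 ≤ i → i + 1 ≤ n → u i < u (i + 1))
    (hum : u n < (m : ℤ))
    (hv1 : 1 < v 1)
    (hvmono : ∀ i, 1 ≤ i → i + 1 ≤ n → v i < v (i + 1))
    (hvn : v n = (m : ℤ))
    (huv : ∀ i, 1 ≤ i → i ≤ n → u i < v i)
    (hstep : ∀ i, 1 ≤ i → i + 1 ≤ n → u (i + 1) ≤ v i + 1)
    (r : ℕ) (hr : 2 ≤ r) :
    IsPure ↥(PLr n u v (r : ℤ)) ↔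
      (IsPure ↥(PL n u v) ∧
       (∃ A : Set ↥(PL n u v), IsChain (· ≤ ·) A ∧ A.ncard = r - 1) ∧
       (∀ A : Set ↥(PL n u v), IsChain (· ≤ ·) A → A.ncard ≤ r - 1)) :=
  stmt11_general n u v hn huv r hr

end LadderPaper
end
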